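/- Completeness of the implicit-inexecutability construction: if S, E_a, I_a ⊨_⇝ A → [a]⊥ under dependence-based consequence, then S, I_a, IMPI_a ⊨_K A → [a]⊥ in plain K, where IMPI_a is the set of candidate implicit inexecutability laws (⋀antecedents(Ê) ∧ ¬χ) → [a]⊥ over subsets Ê ⊆ E_a and clauses χ ∈ NewCons(S, ⋀consequents(Ê)) whose literals are all independent of a and whose antecedent is S-consistent. -/

import Mathlib

/-! Classical propositional formulas. -/
inductive PForm (α : Type) : Type
  | atom : α → PForm α
  | fls  : PForm α
  | not  : PForm α → PForm α
  | and  : PForm α → PForm α → PForm α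
  | or   : PForm α → PForm α → PForm α
  | imp  : PForm α → PForm α → PForm α

def PForm.Sat {α : Type} (v : α → Prop) : PForm α → Prop
  | atom p => v p
  | fls => False
  | not φ => ¬ Sat v φ
  | and φ ψ => Sat v φ ∧ Sat v ψ
  | or φ ψ => Sat v φ ∨ Sat v ψ
  | imp φ ψ => Sat v φ → Sat v ψ

/-- Classical (propositional) global consequence. -/
def EntailsCl {α : Type} (Γ : Set (PForm α)) (φ : PForm α) : Prop :=
  ∀ v : α → Prop, (∀ ψ ∈ Γ, PForm.Sat v ψ) → PForm.Sat v φ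

/-- Multimodal formulas with one box per action. -/
inductive MForm (Act α : Type) : Type
  | atom : α → MForm Act α
  | fls  : MForm Act α
  | not  : MForm Act α → MForm Act α
  | and  : MForm Act α → MForm Act α → MForm Act α
  | or   : MForm Act α → MForm Act α → MForm Act α
  | imp  : MForm Act α → MForm Act α → MForm Act α
  | box  : Act → MForm Act α → MForm Act α

def PForm.toM {Act α : Type} : PForm α → MForm Act α
  | .atom p => .atom p
  | .fls => .fls
  | .not φ => .not φ.toM
  | .and φ ψ => .and φ.toM ψ.toM
  | .or φ ψ => .or φ.toM ψ.toM
  | .imp φ ψ => .imp φ.toM ψ.toM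

/-- A Kripke model for multimodal K. -/
structure KModel (Act α : Type) where
  W : Type
  R : Act → W → W → Prop
  V : W → α → Prop

def MForm.Sat {Act α : Type} (M : KModel Act α) : M.W → MForm Act α → Prop
  | w, atom p => M.V w p
  | _, fls => False
  | w, not φ => ¬ Sat M w φ
  | w, and φ ψ => Sat M w φ ∧ Sat M w ψ
  | w, or φ ψ => Sat M w φ ∨ Sat M w ψ
  | w, imp φ ψ => Sat M w φ → Sat M w ψ
  | w, box a φ => ∀ w', M.R a w w' → Sat M w' φ

/-- Global truth in a model. -/
def Glob {Act α : Type} (M : KModel Act α) (Φ : MForm Act α) : Prop :=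
  ∀ w : M.W, MForm.Sat M w Φ

/-- Global consequence in multimodal K. -/
def ConsK {Act α : Type} (Γ : Set (MForm Act α)) (Φ : MForm Act α) : Prop :=
  ∀ M : KModel Act α, (∀ Ψ ∈ Γ, Glob M Ψ) → Glob M Φ

/-- Literals. -/
abbrev Lit (α : Type) := α × Bool

def Lit.Sat {α : Type} (v : α → Prop) (l : Lit α) : Prop :=
  if l.2 then v l.1 else ¬ v l.1

/-- A dependence relation `⇝ ⊆ Act × Lit`. -/
abbrev Dep (Act α : Type) := Act → Lit α → Prop

/-- `⇝`-models: along `R a`, literals independent of `a` persist. -/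
def IsDepModel {Act α : Type} (dep : Dep Act α) (M : KModel Act α) : Prop :=
  ∀ (a : Act) (w w' : M.W), M.R a w w' → ∀ p : α,
    (¬ dep a (p, true) → ¬ M.V w p → ¬ M.V w' p) ∧
    (¬ dep a (p, false) → M.V w p → M.V w' p)

/-- Dependence-based global consequence. -/
def ConsDep {Act α : Type} (dep : Dep Act α) (Γ : Set (MForm Act α)) (Φ : MForm Act α) : Prop :=
  ∀ M : KModel Act α, IsDepModel dep M → (∀ Ψ ∈ Γ, Glob M Ψ) → Glob M Φ

/-- An action theory: static laws `S`, effect laws `E` (antecedent/consequent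
pairs), executability laws `X` (antecedents), inexecutability laws `I`
(antecedents). -/
structure ActionTheory (Act α : Type) where
  S : Set (PForm α)
  E : Act → Set (PForm α × PForm α)
  X : Act → Set (PForm α)
  I : Act → Set (PForm α)

/-- `⟨a⟩Φ`. -/
def MForm.diam {Act α : Type} (a : Act) (Φ : MForm Act α) : MForm Act α :=
  .not (.box a (.not Φ))

/-- Effect law `A → [a]C`. -/
def effLaw {Act α : Type} (a : Act) (e : PForm α × PForm α) : MForm Act α :=
  .imp e.1.toM (.box a e.2.toM)

/-- Executability law `A → ⟨a⟩⊤`. -/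
def exeLaw {Act α : Type} (a : Act) (A : PForm α) : MForm Act α :=
  .imp A.toM (MForm.diam a (.not .fls))

/-- Inexecutability law `A → [a]⊥`. -/
def inexLaw {Act α : Type} (a : Act) (A : PForm α) : MForm Act α :=
  .imp A.toM (.box a .fls)

variable {Act α : Type}

def staticForms (T : ActionTheory Act α) : Set (MForm Act α) := PForm.toM '' T.S
def effForms (T : ActionTheory Act α) (a : Act) : Set (MForm Act α) := effLaw a '' T.E a
def exeForms (T : ActionTheory Act α) (a : Act) : Set (MForm Act α) := exeLaw a '' T.X a
def inexForms (T : ActionTheory Act α) (a : Act) : Set (MForm Act α) := inexLaw a '' T.I a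

/-- The action theory of the single action `a`:  `S ∪ E_a ∪ X_a ∪ I_a`. -/
def formsFor (T : ActionTheory Act α) (a : Act) : Set (MForm Act α) :=
  staticForms T ∪ effForms T a ∪ exeForms T a ∪ inexForms T a

/-- The whole action theory:  `S ∪ E ∪ X ∪ I`. -/
def allForms (T : ActionTheory Act α) : Set (MForm Act α) :=
  staticForms T ∪ (⋃ a, effForms T a) ∪ (⋃ a, exeForms T a) ∪ (⋃ a, inexForms T a)

/-- Postulate PS for action `a`: no implicit static laws. -/
def PS (T : ActionTheory Act α) (dep : Dep Act α) (a : Act) : Prop :=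
  ∀ φ : PForm α, ConsDep dep (formsFor T a) φ.toM → EntailsCl T.S φ

/-- Postulate PS*: no implicit static laws for the whole theory. -/
def PSstar (T : ActionTheory Act α) (dep : Dep Act α) : Prop :=
  ∀ φ : PForm α, ConsDep dep (allForms T) φ.toM → EntailsCl T.S φ

/-- Postulate PI for action `a`: no implicit inexecutability laws. -/
def PIpost (T : ActionTheory Act α) (dep : Dep Act α) (a : Act) : Prop :=
  ∀ A : PForm α, ConsDep dep (formsFor T a) (inexLaw a A) →
    ConsK (staticForms T ∪ inexForms T a) (inexLaw a A)

/-- Postulate PI*: no implicit inexecutability laws for the whole theory. -/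
def PIstar (T : ActionTheory Act α) (dep : Dep Act α) : Prop :=
  ∀ (a : Act) (A : PForm α), ConsDep dep (allForms T) (inexLaw a A) →
    ConsK (staticForms T ∪ ⋃ a', inexForms T a') (inexLaw a A)

/-! Clauses, prime implicates, new consequences. -/

abbrev Clause (α : Type) := Finset (Lit α)

def Clause.Sat {α : Type} (v : α → Prop) (c : Clause α) : Prop :=
  ∃ l ∈ c, Lit.Sat v l

def EntailsC {α : Type} (Γ : Set (PForm α)) (c : Clause α) : Prop :=
  ∀ v : α → Prop, (∀ φ ∈ Γ, PForm.Sat v φ) → Clause.Sat v c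

def ClEntails {α : Type} (c c' : Clause α) : Prop :=
  ∀ v : α → Prop, Clause.Sat v c → Clause.Sat v c'

/-- Prime implicates of (the conjunction of) `Γ`. -/
def PrimImp {α : Type} (Γ : Set (PForm α)) : Set (Clause α) :=
  {c | EntailsC Γ c ∧ ∀ c' : Clause α, EntailsC Γ c' → ClEntails c' c → ClEntails c c'}

/-- `NewCons(Γ, ψ) = PI(Γ ∧ ψ) \ PI(Γ)`. -/
def NewCons {α : Type} (Γ : Set (PForm α)) (ψ : PForm α) : Set (Clause α) :=
  PrimImp (Γ ∪ {ψ}) \ PrimImp Γ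

def Lit.toForm {α : Type} (l : Lit α) : PForm α :=
  if l.2 then .atom l.1 else .not (.atom l.1)

def Lit.neg {α : Type} (l : Lit α) : Lit α := (l.1, !l.2)

noncomputable def Clause.toForm {α : Type} (c : Clause α) : PForm α :=
  c.toList.foldr (fun l φ => (Lit.toForm l).or φ) .fls

/-- Conjunction of a list of formulas. -/
def conjList {α : Type} (L : List (PForm α)) : PForm α :=
  L.foldr .and (.not .fls)

/-- Frame axioms `¬l → [a]¬l` for literals `l` independent of `a`. -/
def FRA {Act α : Type} (dep : Dep Act α) (a : Act) : Set (MForm Act α) :=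
  { Φ | ∃ l : Lit α, ¬ dep a l ∧
        Φ = .imp ((Lit.neg l).toForm.toM) (.box a ((Lit.neg l).toForm.toM)) }

/-- The candidate implicit inexecutability laws
`(⋀antecedents(Ê) ∧ ¬χ) → [a]⊥` for `Ê ⊆ E_a`,
`χ ∈ NewCons(S, ⋀consequents(Ê))` with all literals of `χ` independent of `a`
and `S`-consistent antecedent. -/
def IMPI {Act α : Type} (T : ActionTheory Act α) (dep : Dep Act α) (a : Act) :
    Set (MForm Act α) :=
  { Φ | ∃ (L : List (PForm α × PForm α)) (χ : Clause α),
      (∀ e ∈ L, e ∈ T.E a) ∧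
      χ ∈ NewCons T.S (conjList (L.map Prod.snd)) ∧
      (∀ l ∈ χ, ¬ dep a l) ∧
      (∃ v : α → Prop, (∀ ψ ∈ T.S, PForm.Sat v ψ) ∧
        PForm.Sat v (conjList (L.map Prod.fst)) ∧ ¬ Clause.Sat v χ) ∧
      Φ = inexLaw a (.and (conjList (L.map Prod.fst)) (.not χ.toForm)) }


/-!
Fix a world `w` where `A` holds, with valuation `v`, and suppose `w` has an `a`-successor.
If some valuation `u` satisfies `S`, every effect triggered at `v`, and all frame axioms
(every `a`-independent literal false at `v` stays false in `u`), then the two-world model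
`v →ₐ u` is a `⇝`-model of `S, E_a, I_a` in which `A → [a]⊥` fails. Otherwise `S` together
with finitely many triggered effects entails the clause of `a`-independent literals false
at `v`; a prime implicate `χ` below it is falsified by `v`, hence new, and the corresponding
law of `IMPI_a` fires at `w`.
-/

section Semantics

@[simp]
lemma PForm.sat_toM (M : KModel Act α) (w : M.W) (φ : PForm α) :
    MForm.Sat M w (φ.toM (Act := Act)) ↔ PForm.Sat (M.V w) φ := by
  induction φ <;> simp [PForm.toM, MForm.Sat, PForm.Sat, *]

lemma Lit.sat_toForm (v : α → Prop) (l : Lit α) : PForm.Sat v l.toForm ↔ Lit.Sat v l := by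
  rcases l with ⟨p, _ | _⟩ <;> simp [Lit.toForm, Lit.Sat, PForm.Sat]

@[simp]
lemma Clause.sat_toForm (v : α → Prop) (c : Clause α) :
    PForm.Sat v c.toForm ↔ Clause.Sat v c := by
  suffices ∀ L : List (Lit α),
      PForm.Sat v (L.foldr (fun l φ => l.toForm.or φ) .fls) ↔ ∃ l ∈ L, Lit.Sat v l by
    simp [Clause.toForm, Clause.Sat, this]
  intro L
  induction L with
  | nil => simp [PForm.Sat]
  | cons l L ih => simp [PForm.Sat, Lit.sat_toForm, ih]

@[simp]
lemma sat_conjList (v : α → Prop) (L : List (PForm α)) :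
    PForm.Sat v (conjList L) ↔ ∀ φ ∈ L, PForm.Sat v φ := by
  induction L with
  | nil => simp [conjList, PForm.Sat]
  | cons φ L ih => simp [conjList, PForm.Sat, ← ih]

lemma sat_inexLaw (M : KModel Act α) (w : M.W) (a : Act) (B : PForm α) :
    MForm.Sat M w (inexLaw a B) ↔ (PForm.Sat (M.V w) B → ∀ w', ¬ M.R a w w') := by
  simp [inexLaw, MForm.Sat]

lemma sat_effLaw (M : KModel Act α) (w : M.W) (a : Act) (e : PForm α × PForm α) :
    MForm.Sat M w (effLaw a e) ↔
      (PForm.Sat (M.V w) e.1 → ∀ w', M.R a w w' → PForm.Sat (M.V w') e.2) := by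
  simp [effLaw, MForm.Sat]

end Semantics

section PrimeImplicates

lemma exists_mem_primImp_clEntails [Finite α] {Γ : Set (PForm α)} {c : Clause α}
    (hc : EntailsC Γ c) : ∃ χ ∈ PrimImp Γ, ClEntails χ c := by
  obtain ⟨χ, ⟨hχΓ, hχc⟩, hmin⟩ :=
    (measure fun c : Clause α => {u : α → Prop | Clause.Sat u c}.ncard).wf.has_min
      {c' | EntailsC Γ c' ∧ ClEntails c' c} ⟨c, hc, fun _ h => h⟩
  refine ⟨χ, ⟨hχΓ, fun c' hc'Γ hc'χ => ?_⟩, hχc⟩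
  by_contra hχc'
  exact hmin c' ⟨hc'Γ, fun u hu => hχc u (hc'χ u hu)⟩
    (Set.ncard_lt_ncard ⟨hc'χ, hχc'⟩ (Set.toFinite _))

/-- Updating `u` to make a literal of `c` true can only make true a literal of `c'` on the
same variable. -/
lemma ClEntails.subset_of_not_sat {c c' : Clause α} (h : ClEntails c c') {u : α → Prop}
    (hu : ¬ Clause.Sat u c') : c ⊆ c' := by
  classical
  rintro ⟨p, b⟩ hl
  by_contra hl'
  set u' := Function.update u p (b = true)
  obtain ⟨⟨q, b'⟩, hm, hsat⟩ := h u' ⟨(p, b), hl, by cases b <;> simp [Lit.Sat, u']⟩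
  by_cases hq : q = p
  · subst hq
    obtain rfl : b' = b := by cases b <;> cases b' <;> simp_all [Lit.Sat, u']
    exact hl' hm
  · exact hu ⟨(q, b'), hm, by simpa [Lit.Sat, u', hq] using hsat⟩

end PrimeImplicates

lemma List.exists_forall_exists_mem {ι β : Type*} [Finite ι] {E : Set β} {R : ι → β → Prop}
    (h : ∀ i, ∃ e ∈ E, R i e) : ∃ L : List β, (∀ e ∈ L, e ∈ E) ∧ ∀ i, ∃ e ∈ L, R i e := by
  have := Fintype.ofFinite ι
  choose f hfE hfR using h
  exact ⟨Finset.univ.toList.map f, by simpa using hfE, fun i => ⟨f i, by simp, hfR i⟩⟩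

section FrameClause

open Classical in
/-- `⋁{l | a ⇝̸ l, v ⊭ l}`: a valuation falsifies it iff it satisfies the frame axioms
for `a` after `v`. -/
noncomputable def frameClause [Fintype α] (dep : Dep Act α) (a : Act) (v : α → Prop) :
    Clause α :=
  Finset.univ.filter fun l => ¬ dep a l ∧ ¬ Lit.Sat v l

variable [Fintype α] {dep : Dep Act α} {a : Act} {v : α → Prop}

lemma mem_frameClause {l : Lit α} : l ∈ frameClause dep a v ↔ ¬ dep a l ∧ ¬ Lit.Sat v l := by
  simp [frameClause]

lemma not_sat_frameClause : ¬ Clause.Sat v (frameClause dep a v) :=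
  fun ⟨_, hl, hv⟩ => (mem_frameClause.mp hl).2 hv

def twoWorld (a : Act) (v u : α → Prop) : KModel Act α where
  W := Bool
  R b x y := b = a ∧ x = false ∧ y = true
  V x := bif x then u else v

lemma isDepModel_twoWorld {u : α → Prop} (hu : ¬ Clause.Sat u (frameClause dep a v)) :
    IsDepModel dep (twoWorld a v u) := by
  rintro _ _ _ ⟨rfl, rfl, rfl⟩ p
  refine ⟨fun hd hv hup => hu ⟨(p, true), mem_frameClause.mpr ⟨hd, ?_⟩, ?_⟩,
    fun hd hv => by_contra fun hup => hu ⟨(p, false), mem_frameClause.mpr ⟨hd, ?_⟩, ?_⟩⟩ <;>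
    simpa [Lit.Sat, twoWorld]

end FrameClause

section Completeness

variable [Fintype α] {T : ActionTheory Act α} {dep : Dep Act α} {a : Act} {v : α → Prop}

lemma sat_frameClause_of_consDep {A : PForm α}
    (h : ConsDep dep (staticForms T ∪ effForms T a ∪ inexForms T a) (inexLaw a A))
    (hvS : ∀ ψ ∈ T.S, PForm.Sat v ψ) (hvA : PForm.Sat v A) (hvI : ∀ B ∈ T.I a, ¬ PForm.Sat v B)
    {u : α → Prop} (huS : ∀ ψ ∈ T.S, PForm.Sat u ψ)
    (huE : ∀ e ∈ T.E a, PForm.Sat v e.1 → PForm.Sat u e.2) :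
    Clause.Sat u (frameClause dep a v) := by
  by_contra hu
  have hlaws : ∀ Ψ ∈ staticForms T ∪ effForms T a ∪ inexForms T a, Glob (twoWorld a v u) Ψ := by
    rintro _ ((⟨φ, hφ, rfl⟩ | ⟨e, he, rfl⟩) | ⟨B, hB, rfl⟩) x
    · cases x
      exacts [(PForm.sat_toM _ _ _).mpr (hvS φ hφ), (PForm.sat_toM _ _ _).mpr (huS φ hφ)]
    · rw [sat_effLaw]
      rintro hx _ ⟨-, rfl, rfl⟩
      exact huE e he hx
    · rw [sat_inexLaw]
      rintro hx _ ⟨-, rfl, rfl⟩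
      exact hvI B hB hx
  exact (sat_inexLaw _ _ _ _).mp (h _ (isDepModel_twoWorld hu) hlaws false) hvA true
    ⟨rfl, rfl, rfl⟩

lemma exists_mem_IMPI_of_sat_frameClause (hvS : ∀ ψ ∈ T.S, PForm.Sat v ψ)
    (hframe : ∀ u : α → Prop, (∀ ψ ∈ T.S, PForm.Sat u ψ) →
      (∀ e ∈ T.E a, PForm.Sat v e.1 → PForm.Sat u e.2) → Clause.Sat u (frameClause dep a v)) :
    ∃ B, inexLaw a B ∈ IMPI T dep a ∧ PForm.Sat v B := by
  have hviol : ∀ u : {u : α → Prop // (∀ ψ ∈ T.S, PForm.Sat u ψ) ∧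
      ¬ Clause.Sat u (frameClause dep a v)},
      ∃ e ∈ {e | e ∈ T.E a ∧ PForm.Sat v e.1}, ¬ PForm.Sat u.1 e.2 := by
    rintro ⟨u, huS, hu⟩
    by_contra! huE
    exact hu (hframe u huS fun e he hve => huE e ⟨he, hve⟩)
  obtain ⟨L, hLE, hL⟩ := List.exists_forall_exists_mem hviol
  have hent : EntailsC (T.S ∪ {conjList (L.map Prod.snd)}) (frameClause dep a v) := by
    intro u hu
    by_contra hfr
    obtain ⟨e, heL, hue⟩ := hL ⟨u, fun ψ hψ => hu ψ (.inl hψ), hfr⟩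
    exact hue ((sat_conjList _ _).mp (hu _ (.inr rfl)) e.2 (List.mem_map_of_mem heL))
  obtain ⟨χ, hχ, hχfr⟩ := exists_mem_primImp_clEntails hent
  have hχsub := hχfr.subset_of_not_sat not_sat_frameClause
  have hvχ : ¬ Clause.Sat v χ := fun ⟨l, hl, hvl⟩ => not_sat_frameClause ⟨l, hχsub hl, hvl⟩
  have hvL : PForm.Sat v (conjList (L.map Prod.fst)) := by
    simpa using fun e he => (hLE e he).2
  refine ⟨_, ⟨L, χ, fun e he => (hLE e he).1, ⟨hχ, fun hχS => hvχ (hχS.1 v hvS)⟩,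
    fun l hl => (mem_frameClause.mp (hχsub hl)).1, ⟨v, hvS, hvL, hvχ⟩, rfl⟩, ?_⟩
  simp only [PForm.Sat, Clause.sat_toForm]
  exact ⟨hvL, hvχ⟩

end Completeness

/-- Appendix B, Lemma 3: completeness of the
implicit-inexecutability construction. -/
theorem stmt_17 [Fintype α] {Act : Type} (T : ActionTheory Act α) (dep : Dep Act α)
    (a : Act) (A : PForm α)
    (h : ConsDep dep (staticForms T ∪ effForms T a ∪ inexForms T a) (inexLaw a A)) :
    ConsK (staticForms T ∪ inexForms T a ∪ IMPI T dep a) (inexLaw a A) := by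
  intro M hM w
  rw [sat_inexLaw]
  intro hA w' hR
  have hS : ∀ ψ ∈ T.S, PForm.Sat (M.V w) ψ := fun ψ hψ =>
    (PForm.sat_toM M w ψ).mp (hM _ (.inl (.inl ⟨ψ, hψ, rfl⟩)) w)
  have hI : ∀ B ∈ T.I a, ¬ PForm.Sat (M.V w) B := fun B hB hwB =>
    (sat_inexLaw M w a B).mp (hM _ (.inl (.inr ⟨B, hB, rfl⟩)) w) hwB w' hR
  obtain ⟨B, hB, hwB⟩ := exists_mem_IMPI_of_sat_frameClause hS fun u huS huE =>
    sat_frameClause_of_consDep h hS hA hI huS huE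
  exact (sat_inexLaw M w a B).mp (hM _ (.inr hB) w) hwB w' hR
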